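/- Let t₀ ∈ ℝ and let {t_k}_{k≥0} be a strictly increasing unbounded sequence with first element t₀. Let ξ : [t₀,∞) → ℝᵐ be continuous and define r(t) = ∫_{t_k}^{t} ξ(s) ds for t ∈ [t_k, t_{k+1}). Let a ≥ 0 be a constant, β a class KL function, γ a class K∞ function, ε > 1, and γ̄ a class K∞ function with γ̄(s) ≥ ε·γ(s) for all s > 0. Assume that ‖ξ(t)‖ ≤ max{β(a, t − t₀), γ(‖r_[t₀,t]‖)} for all t ≥ t₀, and that (t − t_k)·γ̄(‖r_[t_k,t]‖) ≤ ‖r_[t_k,t]‖ for every k and every t ∈ [t_k, t_{k+1}). Then sup_{t ≥ t₀} ‖ξ(t)‖ ≤ β(a, 0). -/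

import Mathlib

/-! Fix `T ≥ t₀` and let `S = ‖ξ_[t₀,T]‖`. On an inter-event interval `[t_k, s]` the output is
the integral of `ξ`, so `M = ‖r_[t_k,s]‖ ≤ S (s - t_k)`; the triggering rule
`(s - t_k) γ̄(M) ≤ M` then forces `ε γ(M) ≤ γ̄(M) ≤ S`. Hence `ε γ(‖r_[t₀,u]‖) ≤ S` for all
`u ∈ [t₀, T]`, and the bound on `ξ` gives `S ≤ max (β(a,0), S / ε)`. Since `ε > 1`, this is only
possible if `S ≤ β(a,0)`. -/

open Filter Set

/-- A function is of class K∞. -/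
def IsClassKInf (γ : ℝ → ℝ) : Prop :=
  ContinuousOn γ (Set.Ici 0) ∧ StrictMonoOn γ (Set.Ici 0) ∧ γ 0 = 0 ∧
    Filter.Tendsto γ Filter.atTop Filter.atTop

/-- A function is of class KL. -/
def IsClassKL (β : ℝ → ℝ → ℝ) : Prop :=
  (∀ t, 0 ≤ t → ContinuousOn (fun s => β s t) (Set.Ici 0) ∧
      StrictMonoOn (fun s => β s t) (Set.Ici 0) ∧ β 0 t = 0) ∧
  (∀ s, 0 ≤ s → AntitoneOn (fun t => β s t) (Set.Ici 0) ∧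
      Filter.Tendsto (fun t => β s t) Filter.atTop (nhds 0))

/-- `‖v_[a,b]‖ = sup_{a ≤ τ ≤ b} ‖v τ‖`. -/
noncomputable def supNorm {E : Type*} [NormedAddCommGroup E] (v : ℝ → E) (a b : ℝ) : ℝ :=
  sSup ((fun τ => ‖v τ‖) '' Set.Icc a b)

/-- The next triggering time (in `EReal`, so that `sInf ∅ = ⊤`). -/
noncomputable def triggerTime {E : Type*} [NormedAddCommGroup E]
    (γb : ℝ → ℝ) (r : ℝ → E) (tk : ℝ) : EReal :=
  sInf (((↑) : ℝ → EReal) ''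
    {t : ℝ | tk < t ∧ (t - tk) * γb (supNorm r tk t) = supNorm r tk t ∧ supNorm r tk t ≠ 0})

lemma IsClassKInf.apply_zero {γ : ℝ → ℝ} (hγ : IsClassKInf γ) : γ 0 = 0 :=
  hγ.2.2.1

lemma IsClassKInf.monotoneOn {γ : ℝ → ℝ} (hγ : IsClassKInf γ) : MonotoneOn γ (Ici 0) :=
  hγ.2.1.monotoneOn

lemma IsClassKL.nonneg {β : ℝ → ℝ → ℝ} (hβ : IsClassKL β) {s t : ℝ} (hs : 0 ≤ s) (ht : 0 ≤ t) :
    0 ≤ β s t := by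
  obtain ⟨-, hmono, hzero⟩ := hβ.1 t ht
  simpa [hzero] using hmono.monotoneOn self_mem_Ici hs hs

lemma IsClassKL.le_apply_zero {β : ℝ → ℝ → ℝ} (hβ : IsClassKL β) {s t : ℝ} (hs : 0 ≤ s)
    (ht : 0 ≤ t) : β s t ≤ β s 0 :=
  (hβ.2 s hs).1 self_mem_Ici ht ht

lemma exists_mem_Ico_of_le_of_lt {t : ℕ → ℝ} {s : ℝ} {n : ℕ} (h0 : t 0 ≤ s) (hn : s < t n) :
    ∃ k, s ∈ Ico (t k) (t (k + 1)) := by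
  classical
  have hex : ∃ n, s < t n := ⟨n, hn⟩
  obtain ⟨k, hk⟩ := Nat.exists_eq_add_one_of_ne_zero fun h : Nat.find hex = 0 =>
    (Nat.find_spec hex).not_ge (h ▸ h0)
  refine ⟨k, not_lt.1 (Nat.find_min hex (by omega)), ?_⟩
  exact hk ▸ Nat.find_spec hex

section supNorm

variable {E : Type*} [NormedAddCommGroup E] {v : ℝ → E} {a b C : ℝ}

lemma norm_le_supNorm (hv : BddAbove ((fun τ => ‖v τ‖) '' Icc a b)) {τ : ℝ} (hτ : τ ∈ Icc a b) :
    ‖v τ‖ ≤ supNorm v a b :=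
  le_csSup hv (mem_image_of_mem _ hτ)

lemma ContinuousOn.norm_le_supNorm (hv : ContinuousOn v (Icc a b)) {τ : ℝ} (hτ : τ ∈ Icc a b) :
    ‖v τ‖ ≤ supNorm v a b :=
  _root_.norm_le_supNorm (isCompact_Icc.image_of_continuousOn hv.norm).bddAbove hτ

lemma supNorm_le (hab : a ≤ b) (h : ∀ τ ∈ Icc a b, ‖v τ‖ ≤ C) : supNorm v a b ≤ C :=
  csSup_le ((nonempty_Icc.2 hab).image _) (forall_mem_image.2 h)

lemma norm_le_mul_of_eq_intervalIntegral [NormedSpace ℝ E] {ξ : ℝ → E}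
    (hξ : ∀ x ∈ Ioc a b, ‖ξ x‖ ≤ C) (hv : ∀ u ∈ Icc a b, v u = ∫ τ in a..u, ξ τ)
    (hC : 0 ≤ C) : ∀ u ∈ Icc a b, ‖v u‖ ≤ C * (b - a) := by
  intro u hu
  rw [hv u hu]
  calc ‖∫ τ in a..u, ξ τ‖ ≤ C * |u - a| :=
        intervalIntegral.norm_integral_le_of_norm_le_const fun x hx => by
          rw [uIoc_of_le hu.1] at hx
          exact hξ x ⟨hx.1, hx.2.trans hu.2⟩
    _ ≤ C * (b - a) := by
        rw [abs_of_nonneg (sub_nonneg.2 hu.1)]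
        gcongr
        exact hu.2

end supNorm

lemma mul_apply_le_of_trigger {γ γb : ℝ → ℝ} {ε S d M : ℝ} (hγ0 : γ 0 = 0)
    (hγb : ∀ x > 0, ε * γ x ≤ γb x) (hS : 0 ≤ S) (hM : 0 ≤ M) (htrig : d * γb M ≤ M)
    (hMS : M ≤ S * d) : ε * γ M ≤ S := by
  rcases hM.eq_or_lt with rfl | hM
  · simpa [hγ0] using hS
  have hd : 0 < d := pos_of_mul_pos_right (hM.trans_le hMS) hS
  have : γb M ≤ S := le_of_mul_le_mul_left (by linarith) hd
  exact (hγb M hM).trans this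

lemma mul_apply_norm_le_of_trigger {E : Type*} [NormedAddCommGroup E] [NormedSpace ℝ E]
    {ξ r : ℝ → E} {γ γb : ℝ → ℝ} {ε S tk s : ℝ} (hγ : IsClassKInf γ) (hε : 0 < ε)
    (hγb : ∀ x > 0, ε * γ x ≤ γb x) (hS : 0 ≤ S) (hs : tk ≤ s)
    (hξ : ∀ x ∈ Ioc tk s, ‖ξ x‖ ≤ S) (hr : ∀ u ∈ Icc tk s, r u = ∫ τ in tk..u, ξ τ)
    (htrig : (s - tk) * γb (supNorm r tk s) ≤ supNorm r tk s) :
    ε * γ ‖r s‖ ≤ S := by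
  have hrS := norm_le_mul_of_eq_intervalIntegral hξ hr hS
  have hrM : ‖r s‖ ≤ supNorm r tk s := norm_le_supNorm ⟨_, forall_mem_image.2 hrS⟩ ⟨hs, le_rfl⟩
  have hM : 0 ≤ supNorm r tk s := (norm_nonneg _).trans hrM
  calc ε * γ ‖r s‖ ≤ ε * γ (supNorm r tk s) := by
        gcongr
        exact hγ.monotoneOn (norm_nonneg _) hM hrM
    _ ≤ S := mul_apply_le_of_trigger hγ.apply_zero hγb hS hM htrig (supNorm_le hs hrS)

/-- `hf0` covers an empty or unbounded `A`, whose `sSup` is the junk value `0`. -/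
lemma apply_sSup_le_of_continuousOn {f : ℝ → ℝ} {A : Set ℝ} {c : ℝ} (hf : ContinuousOn f (Ici 0))
    (hf0 : f 0 ≤ c) (hA : A ⊆ Ici 0) (hAc : ∀ x ∈ A, f x ≤ c) : f (sSup A) ≤ c := by
  by_cases hne : A.Nonempty
  · by_cases hbdd : BddAbove A
    · have hclosed : IsClosed (Ici 0 ∩ f ⁻¹' Iic c) :=
        hf.preimage_isClosed_of_isClosed isClosed_Ici isClosed_Iic
      have hAsub : A ⊆ Ici 0 ∩ f ⁻¹' Iic c := fun x hx => ⟨hA hx, hAc x hx⟩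
      exact (closure_minimal hAsub hclosed (csSup_mem_closure hne hbdd)).2
    · rwa [Real.sSup_of_not_bddAbove hbdd]
  · rwa [not_nonempty_iff_eq_empty.1 hne, Real.sSup_empty]

lemma le_of_le_max_div {B S ε : ℝ} (hB : 0 ≤ B) (hε : 1 < ε) (h : S ≤ max B (S / ε)) : S ≤ B := by
  rcases le_max_iff.1 h with h | h
  · exact h
  · rw [le_div_iff₀ (by linarith)] at h
    nlinarith

theorem aux_output_bounded_general {m : ℕ} (t0 : ℝ) (t : ℕ → ℝ) (ht0 : t 0 = t0)
    (hmono : StrictMono t) (hunbdd : Filter.Tendsto t Filter.atTop Filter.atTop)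
    (ξ r : ℝ → EuclideanSpace ℝ (Fin m)) (hξcont : ContinuousOn ξ (Set.Ici t0))
    (hr : ∀ k : ℕ, ∀ s ∈ Set.Ico (t k) (t (k + 1)), r s = ∫ τ in (t k)..s, ξ τ)
    (a : ℝ) (ha : 0 ≤ a) (β : ℝ → ℝ → ℝ) (hβ : IsClassKL β)
    (γ γb : ℝ → ℝ) (hγ : IsClassKInf γ)
    (ε : ℝ) (hε : 1 < ε) (hγbγ : ∀ s > 0, ε * γ s ≤ γb s)
    (hbound : ∀ τ, t0 ≤ τ → ‖ξ τ‖ ≤ max (β a (τ - t0)) (γ (supNorm r t0 τ)))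
    (htrig : ∀ k : ℕ, ∀ τ ∈ Set.Ico (t k) (t (k + 1)),
      (τ - t k) * γb (supNorm r (t k) τ) ≤ supNorm r (t k) τ) :
    ∀ τ, t0 ≤ τ → ‖ξ τ‖ ≤ β a 0 := by
  intro T hT
  set S := supNorm ξ t0 T
  have hξS : ∀ u ∈ Icc t0 T, ‖ξ u‖ ≤ S := fun u hu =>
    (hξcont.mono Icc_subset_Ici_self).norm_le_supNorm hu
  have hS : 0 ≤ S := (norm_nonneg _).trans (hξS T ⟨hT, le_rfl⟩)
  have hε0 : 0 < ε := by linarith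
  have hr_le : ∀ s ∈ Icc t0 T, ε * γ ‖r s‖ ≤ S := by
    rintro s ⟨hs0, hsT⟩
    obtain ⟨n, hn⟩ := (hunbdd.eventually_gt_atTop s).exists
    obtain ⟨k, hk⟩ := exists_mem_Ico_of_le_of_lt (ht0 ▸ hs0) hn
    have htk : t0 ≤ t k := ht0 ▸ hmono.monotone k.zero_le
    exact mul_apply_norm_le_of_trigger hγ hε0 hγbγ hS hk.1
      (fun x hx => hξS x ⟨htk.trans hx.1.le, hx.2.trans hsT⟩)
      (fun u hu => hr k u ⟨hu.1, hu.2.trans_lt hk.2⟩) (htrig k s hk)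
  have hγr : ∀ u ∈ Icc t0 T, γ (supNorm r t0 u) ≤ S / ε := fun u hu => by
    rw [le_div_iff₀' hε0]
    refine apply_sSup_le_of_continuousOn (f := fun x => ε * γ x) (continuousOn_const.mul hγ.1)
      (by simpa [hγ.apply_zero] using hS) (image_subset_iff.2 fun _ _ => norm_nonneg _) ?_
    exact forall_mem_image.2 fun s hs => hr_le s ⟨hs.1, hs.2.trans hu.2⟩
  have hSmax : S ≤ max (β a 0) (S / ε) := supNorm_le hT fun u hu =>
    (hbound u hu.1).trans (max_le_max (hβ.le_apply_zero ha (sub_nonneg.2 hu.1)) (hγr u hu))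
  exact (hξS T ⟨hT, le_rfl⟩).trans (le_of_le_max_div (hβ.nonneg ha le_rfl) hε hSmax)

/-- Boundedness of the auxiliary output ξ in the proof of Theorem 1:
`sup_{t ≥ t₀} ‖ξ(t)‖ ≤ β(a, 0)`. -/
theorem aux_output_bounded {m : ℕ} (t0 : ℝ) (t : ℕ → ℝ) (ht0 : t 0 = t0)
    (hmono : StrictMono t) (hunbdd : Filter.Tendsto t Filter.atTop Filter.atTop)
    (ξ r : ℝ → EuclideanSpace ℝ (Fin m)) (hξcont : ContinuousOn ξ (Set.Ici t0))
    (hr : ∀ k : ℕ, ∀ s ∈ Set.Ico (t k) (t (k + 1)), r s = ∫ τ in (t k)..s, ξ τ)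
    (a : ℝ) (ha : 0 ≤ a) (β : ℝ → ℝ → ℝ) (hβ : IsClassKL β)
    (γ γb : ℝ → ℝ) (hγ : IsClassKInf γ) (hγb : IsClassKInf γb)
    (ε : ℝ) (hε : 1 < ε) (hγbγ : ∀ s > 0, ε * γ s ≤ γb s)
    (hbound : ∀ τ, t0 ≤ τ → ‖ξ τ‖ ≤ max (β a (τ - t0)) (γ (supNorm r t0 τ)))
    (htrig : ∀ k : ℕ, ∀ τ ∈ Set.Ico (t k) (t (k + 1)),
      (τ - t k) * γb (supNorm r (t k) τ) ≤ supNorm r (t k) τ) :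
    ∀ τ, t0 ≤ τ → ‖ξ τ‖ ≤ β a 0 :=
  aux_output_bounded_general t0 t ht0 hmono hunbdd ξ r hξcont hr a ha β hβ γ γb hγ ε hε hγbγ hbound
    htrig
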